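/- Fix a real number q ≥ 1/2 and reals ℓ > 0 and K ≥ 0. There exists a constant C > 0, depending only on q, ℓ and K, with the following property. For every natural number N ≥ 1, every λ : {1,…,N} → (0,∞), and every x, G ∈ ℝ^N with ∑_{j=1}^N λ_j² G_j² ≤ K², setting δ := ℓ·N^{−1/2}, S := N^{−1} ∑_{j=1}^N x_j²/λ_j², and, for ξ ∈ ℝ^N, y(ξ)_j := x_j − δ(x_j + λ_j² G_j) + √(2δ)·λ_j·ξ_j, one has ∫ ( ∑_{j=1}^N (y(ξ)_j − x_j)² / λ_j² )^q dμ_N(ξ) ≤ C · ( S^q + N^{q/2} ), where μ_N is the N-fold product of the standard Gaussian measure N(0,1) on ℝ. -/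

import Mathlib

open MeasureTheory ProbabilityTheory

/-!
Divided by `λ_j`, the `j`-th coordinate of the jump is `-δ x_j/λ_j - δ λ_j G_j + √(2δ) ξ_j`. So for
`δ = ℓ/√N` the squared Cameron–Martin norm of the jump is at most `3ℓ² S + (3ℓ²K² + 6ℓ) √N Y`, where
`Y = N⁻¹ ∑ (1 + ξ_j²) ≥ 1`. Raise this to the power `q` and split the sum at the cost of a factor `2^q`.
Since `Y ≥ 1`, we have `Y^q ≤ Y^n` for an integer `n ≥ q`, and the power-mean inequality gives
`Y^n ≤ N⁻¹ ∑ (1 + ξ_j²)^n`. The expectation of the right-hand side is the Gaussian moment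
`E (1 + ξ²)^n`, which does not depend on `N`.
-/

/-- `‖y - x‖²_{C_N}` for the proposal `y = x - δ (x + C_N ∇Ψ(x)) + √(2δ) C_N^{1/2} ξ`,
with `C_N = diag (λ_j²)` and `G = ∇Ψ(x)`. -/
noncomputable def malaJumpNormSq {N : ℕ} (δ : ℝ) (lam x G ξ : Fin N → ℝ) : ℝ :=
  ∑ j, ((x j - δ * (x j + lam j ^ 2 * G j) + Real.sqrt (2 * δ) * lam j * ξ j) - x j) ^ 2
    / lam j ^ 2

lemma malaJumpNormSq_nonneg {N : ℕ} (δ : ℝ) (lam x G ξ : Fin N → ℝ) :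
    0 ≤ malaJumpNormSq δ lam x G ξ := by
  unfold malaJumpNormSq
  positivity

lemma Real.add_rpow_le_two_rpow_mul_add_rpow {a b p : ℝ} (ha : 0 ≤ a) (hb : 0 ≤ b)
    (hp : 0 ≤ p) : (a + b) ^ p ≤ 2 ^ p * (a ^ p + b ^ p) := by
  calc (a + b) ^ p ≤ (2 * max a b) ^ p := by
        gcongr
        linarith [le_max_left a b, le_max_right a b]
    _ = 2 ^ p * max a b ^ p := Real.mul_rpow zero_le_two (le_max_of_le_left ha)
    _ ≤ 2 ^ p * (a ^ p + b ^ p) := by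
        have := Real.rpow_nonneg ha p
        have := Real.rpow_nonneg hb p
        gcongr
        rcases max_choice a b with h | h <;> rw [h] <;> linarith

lemma one_add_mean_sq_rpow_le {ι : Type*} [Fintype ι] [Nonempty ι] (ξ : ι → ℝ) {q : ℝ}
    {n : ℕ} (hqn : q ≤ n) :
    (1 + (∑ i, ξ i ^ 2) / Fintype.card ι) ^ q
      ≤ (∑ i, (1 + ξ i ^ 2) ^ n) / Fintype.card ι := by
  have hcard : (0 : ℝ) < Fintype.card ι := by exact_mod_cast Fintype.card_pos
  have hmean : 1 + (∑ i, ξ i ^ 2) / Fintype.card ι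
      = ∑ i, (Fintype.card ι : ℝ)⁻¹ * (1 + ξ i ^ 2) := by
    rw [← Finset.mul_sum, Finset.sum_add_distrib]
    simp only [Finset.sum_const, Finset.card_univ, nsmul_eq_mul, mul_one]
    field_simp
  have hone : 1 ≤ 1 + (∑ i, ξ i ^ 2) / Fintype.card ι :=
    le_add_of_nonneg_right (by positivity)
  calc (1 + (∑ i, ξ i ^ 2) / Fintype.card ι) ^ q
      ≤ (1 + (∑ i, ξ i ^ 2) / Fintype.card ι) ^ n := by
        simpa using Real.rpow_le_rpow_of_exponent_le hone hqn
    _ ≤ ∑ i, (Fintype.card ι : ℝ)⁻¹ * (1 + ξ i ^ 2) ^ n := by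
        rw [hmean]
        exact Real.pow_arith_mean_le_arith_mean_pow _ _ _ (fun _ _ => by positivity)
          (by simp [hcard.ne']) (fun _ _ => by positivity) n
    _ = (∑ i, (1 + ξ i ^ 2) ^ n) / Fintype.card ι := by
        rw [← Finset.mul_sum, inv_mul_eq_div]

lemma integrable_one_add_sq_pow_gaussianReal (μ : ℝ) (v : NNReal) (n : ℕ) :
    Integrable (fun t : ℝ => (1 + t ^ 2) ^ n) (gaussianReal μ v) := by
  simp_rw [add_pow, one_pow, one_mul]
  refine integrable_finsetSum _ fun k _ => Integrable.mul_const ?_ _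
  refine ((memLp_id_gaussianReal (μ := μ) (v := v) (2 * (n - k) : ℕ)).integrable_norm_pow').congr
    (.of_forall fun t => ?_)
  simp [pow_mul, sq_abs]

lemma integral_sum_comp_eval_pi {ι α : Type*} [Fintype ι] [MeasurableSpace α] (ν : Measure α)
    [IsProbabilityMeasure ν] {f : α → ℝ} (hf : Integrable f ν) :
    ∫ ξ, ∑ i, f (ξ i) ∂(Measure.pi fun _ : ι => ν) = Fintype.card ι * ∫ t, f t ∂ν := by
  rw [integral_finsetSum _ fun i _ => integrable_comp_eval hf]
  simp [integral_comp_eval (μ := fun _ => ν) hf.aestronglyMeasurable]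

lemma sq_proposal_increment_div_le {δ lam x G ξ : ℝ} (hδ : 0 ≤ δ) (hlam : lam ≠ 0) :
    ((x - δ * (x + lam ^ 2 * G) + Real.sqrt (2 * δ) * lam * ξ) - x) ^ 2 / lam ^ 2
      ≤ 3 * (δ ^ 2 * (x ^ 2 / lam ^ 2) + δ ^ 2 * (lam ^ 2 * G ^ 2) + 2 * δ * ξ ^ 2) := by
  have hsq : Real.sqrt (2 * δ) ^ 2 = 2 * δ := Real.sq_sqrt (by positivity)
  have sq_add_add_le (a b c : ℝ) : (a + b + c) ^ 2 ≤ 3 * (a ^ 2 + b ^ 2 + c ^ 2) := by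
    nlinarith [sq_nonneg (a - b), sq_nonneg (b - c), sq_nonneg (a - c)]
  calc ((x - δ * (x + lam ^ 2 * G) + Real.sqrt (2 * δ) * lam * ξ) - x) ^ 2 / lam ^ 2
      = (-(δ * (x / lam)) + -(δ * (lam * G)) + Real.sqrt (2 * δ) * ξ) ^ 2 := by
        field_simp
        ring
    _ ≤ 3 * ((-(δ * (x / lam))) ^ 2 + (-(δ * (lam * G))) ^ 2 + (Real.sqrt (2 * δ) * ξ) ^ 2) :=
        sq_add_add_le _ _ _
    _ = 3 * (δ ^ 2 * (x ^ 2 / lam ^ 2) + δ ^ 2 * (lam ^ 2 * G ^ 2) + 2 * δ * ξ ^ 2) := by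
        rw [mul_pow _ ξ, hsq]
        ring

lemma malaJumpNormSq_le {N : ℕ} {δ K : ℝ} {lam x G : Fin N → ℝ} (hδ : 0 ≤ δ)
    (hlam : ∀ j, lam j ≠ 0) (hG : ∑ j, lam j ^ 2 * G j ^ 2 ≤ K ^ 2) (ξ : Fin N → ℝ) :
    malaJumpNormSq δ lam x G ξ
      ≤ 3 * (δ ^ 2 * ∑ j, x j ^ 2 / lam j ^ 2 + δ ^ 2 * K ^ 2 + 2 * δ * ∑ j, ξ j ^ 2) :=
  calc malaJumpNormSq δ lam x G ξ
      ≤ ∑ j, 3 * (δ ^ 2 * (x j ^ 2 / lam j ^ 2) + δ ^ 2 * (lam j ^ 2 * G j ^ 2)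
          + 2 * δ * ξ j ^ 2) :=
        Finset.sum_le_sum fun j _ => sq_proposal_increment_div_le hδ (hlam j)
    _ = 3 * (δ ^ 2 * ∑ j, x j ^ 2 / lam j ^ 2 + δ ^ 2 * ∑ j, lam j ^ 2 * G j ^ 2
          + 2 * δ * ∑ j, ξ j ^ 2) := by
        simp only [Finset.mul_sum, ← Finset.sum_add_distrib]
    _ ≤ _ := by gcongr

lemma malaJumpNormSq_le_of_step_eq {N : ℕ} (hN : 1 ≤ N) {l K : ℝ} (hl : 0 ≤ l)
    {lam x G : Fin N → ℝ} (hlam : ∀ j, lam j ≠ 0) (hG : ∑ j, lam j ^ 2 * G j ^ 2 ≤ K ^ 2)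
    (ξ : Fin N → ℝ) :
    malaJumpNormSq (l / Real.sqrt N) lam x G ξ
      ≤ 3 * l ^ 2 * ((1 / (N : ℝ)) * ∑ j, x j ^ 2 / lam j ^ 2)
        + (3 * l ^ 2 * K ^ 2 + 6 * l) * Real.sqrt N * (1 + (∑ j, ξ j ^ 2) / N) := by
  have hN0 : (0 : ℝ) < N := by exact_mod_cast hN
  have hsN : 1 ≤ Real.sqrt N := Real.one_le_sqrt.mpr (by exact_mod_cast hN)
  have hsN2 : Real.sqrt N ^ 2 = N := Real.sq_sqrt hN0.le
  set X := ∑ j, ξ j ^ 2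
  have hX : 0 ≤ X / N := by positivity
  have hδ2 : (l / Real.sqrt N) ^ 2 = l ^ 2 / N := by rw [div_pow, hsN2]
  have hδX : l / Real.sqrt N * X = l * Real.sqrt N * (X / N) := by
    field_simp
    rw [hsN2]
    ring
  have hK : l ^ 2 / N * K ^ 2 ≤ l ^ 2 * K ^ 2 * Real.sqrt N * (1 + X / N) := by
    have : l ^ 2 / N ≤ l ^ 2 := div_le_self (sq_nonneg l) (by exact_mod_cast hN)
    have : 1 ≤ Real.sqrt N * (1 + X / N) := by nlinarith
    calc l ^ 2 / N * K ^ 2 ≤ l ^ 2 * K ^ 2 := by gcongr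
      _ ≤ l ^ 2 * K ^ 2 * (Real.sqrt N * (1 + X / N)) :=
        le_mul_of_one_le_right (by positivity) this
      _ = _ := by ring
  have hXN : l * Real.sqrt N * (X / N) ≤ l * Real.sqrt N * (1 + X / N) := by gcongr; linarith
  calc malaJumpNormSq (l / Real.sqrt N) lam x G ξ
      ≤ 3 * ((l / Real.sqrt N) ^ 2 * ∑ j, x j ^ 2 / lam j ^ 2 + (l / Real.sqrt N) ^ 2 * K ^ 2
          + 2 * (l / Real.sqrt N) * X) := malaJumpNormSq_le (by positivity) hlam hG ξ
    _ = 3 * l ^ 2 * ((1 / (N : ℝ)) * ∑ j, x j ^ 2 / lam j ^ 2) + 3 * (l ^ 2 / N * K ^ 2)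
          + 6 * (l * Real.sqrt N * (X / N)) := by
        rw [hδ2, mul_assoc 2, hδX]
        ring
    _ ≤ _ := by linarith

lemma malaJumpNormSq_rpow_le {N : ℕ} (hN : 1 ≤ N) {q l K : ℝ} {n : ℕ} (hq : 0 ≤ q)
    (hqn : q ≤ n) (hl : 0 ≤ l) {lam x G : Fin N → ℝ} (hlam : ∀ j, lam j ≠ 0)
    (hG : ∑ j, lam j ^ 2 * G j ^ 2 ≤ K ^ 2) (ξ : Fin N → ℝ) :
    malaJumpNormSq (l / Real.sqrt N) lam x G ξ ^ q
      ≤ 2 ^ q * (3 * l ^ 2) ^ q * ((1 / (N : ℝ)) * ∑ j, x j ^ 2 / lam j ^ 2) ^ q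
        + 2 ^ q * (3 * l ^ 2 * K ^ 2 + 6 * l) ^ q * (N : ℝ) ^ (q / 2)
          * ((∑ j, (1 + ξ j ^ 2) ^ n) / N) := by
  have : Nonempty (Fin N) := ⟨⟨0, hN⟩⟩
  set S := (1 / (N : ℝ)) * ∑ j, x j ^ 2 / lam j ^ 2
  set Y := 1 + (∑ j, ξ j ^ 2) / N
  have hS : 0 ≤ S := by positivity
  have hY : 0 ≤ Y := by positivity
  have hsqrt : Real.sqrt N ^ q = (N : ℝ) ^ (q / 2) := by
    rw [Real.sqrt_eq_rpow, ← Real.rpow_mul (Nat.cast_nonneg N)]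
    ring_nf
  have hmean : Y ^ q ≤ (∑ j, (1 + ξ j ^ 2) ^ n) / N := by
    simpa using one_add_mean_sq_rpow_le ξ hqn
  calc malaJumpNormSq (l / Real.sqrt N) lam x G ξ ^ q
      ≤ (3 * l ^ 2 * S + (3 * l ^ 2 * K ^ 2 + 6 * l) * Real.sqrt N * Y) ^ q :=
        Real.rpow_le_rpow (malaJumpNormSq_nonneg _ _ _ _ _)
          (malaJumpNormSq_le_of_step_eq hN hl hlam hG ξ) hq
    _ ≤ 2 ^ q * ((3 * l ^ 2 * S) ^ q + ((3 * l ^ 2 * K ^ 2 + 6 * l) * Real.sqrt N * Y) ^ q) :=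
        Real.add_rpow_le_two_rpow_mul_add_rpow (by positivity) (by positivity) hq
    _ = 2 ^ q * (3 * l ^ 2) ^ q * S ^ q
          + 2 ^ q * (3 * l ^ 2 * K ^ 2 + 6 * l) ^ q * (N : ℝ) ^ (q / 2) * Y ^ q := by
        rw [Real.mul_rpow (by positivity) hS, Real.mul_rpow (by positivity) hY,
          Real.mul_rpow (by positivity) (Real.sqrt_nonneg _), hsqrt]
        ring
    _ ≤ _ := by gcongr

lemma integral_malaJumpNormSq_rpow_le {N : ℕ} (hN : 1 ≤ N) {q l K : ℝ} {n : ℕ} (hq : 0 ≤ q)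
    (hqn : q ≤ n) (hl : 0 ≤ l) {lam x G : Fin N → ℝ} (hlam : ∀ j, lam j ≠ 0)
    (hG : ∑ j, lam j ^ 2 * G j ^ 2 ≤ K ^ 2) :
    ∫ ξ, malaJumpNormSq (l / Real.sqrt N) lam x G ξ ^ q
        ∂(Measure.pi fun _ : Fin N => gaussianReal 0 1)
      ≤ 2 ^ q * (3 * l ^ 2) ^ q * ((1 / (N : ℝ)) * ∑ j, x j ^ 2 / lam j ^ 2) ^ q
        + 2 ^ q * (3 * l ^ 2 * K ^ 2 + 6 * l) ^ q * (N : ℝ) ^ (q / 2)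
          * ∫ t, (1 + t ^ 2) ^ n ∂gaussianReal 0 1 := by
  have hint := integrable_one_add_sq_pow_gaussianReal 0 1 n
  have hmean_int : Integrable (fun ξ : Fin N → ℝ => (∑ j, (1 + ξ j ^ 2) ^ n) / (N : ℝ))
      (Measure.pi fun _ : Fin N => gaussianReal 0 1) :=
    (integrable_finsetSum _ fun j _ =>
      integrable_comp_eval (μ := fun _ => gaussianReal 0 1) hint).div_const _
  refine (integral_mono_of_nonneg
    (.of_forall fun ξ => Real.rpow_nonneg (malaJumpNormSq_nonneg _ _ _ _ ξ) q)
    ((integrable_const _).add (hmean_int.const_mul _))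
    (.of_forall fun ξ => malaJumpNormSq_rpow_le hN hq hqn hl hlam hG ξ)).trans_eq ?_
  simp only [Pi.add_apply]
  rw [integral_add (integrable_const _) (hmean_int.const_mul _), integral_const,
    integral_const_mul, integral_div, integral_sum_comp_eval_pi _ hint, probReal_univ,
    one_smul, Fintype.card_fin, mul_div_cancel_left₀ _ (by positivity)]

theorem mala_jump_size_cameron_martin_general (q l K : ℝ) (hq : 1 / 2 ≤ q) (hl : 0 < l) :
    ∃ C : ℝ, 0 < C ∧
      ∀ (N : ℕ), 1 ≤ N →
      ∀ lam x G : Fin N → ℝ,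
        (∀ j, 0 < lam j) →
        (∑ j, lam j ^ 2 * G j ^ 2) ≤ K ^ 2 →
        (∫ ξ : Fin N → ℝ,
            (∑ j, ((x j - (l / Real.sqrt N) * (x j + lam j ^ 2 * G j)
                  + Real.sqrt (2 * (l / Real.sqrt N)) * lam j * ξ j) - x j) ^ 2
              / lam j ^ 2) ^ q
            ∂(Measure.pi fun _ : Fin N => gaussianReal 0 1)) ≤
          C * (((1 / (N : ℝ)) * ∑ j, x j ^ 2 / lam j ^ 2) ^ q
                + (N : ℝ) ^ (q / 2)) := by
  have hq0 : 0 ≤ q := by linarith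
  set m := ∫ t, (1 + t ^ 2) ^ ⌈q⌉₊ ∂gaussianReal 0 1
  set A := 2 ^ q * (3 * l ^ 2) ^ q
  set B := 2 ^ q * (3 * l ^ 2 * K ^ 2 + 6 * l) ^ q
  have hm : 0 ≤ m := integral_nonneg fun t => by positivity
  have hA : 0 ≤ A := by positivity
  have hB : 0 ≤ B := by positivity
  refine ⟨A + B * m, by positivity, fun N hN lam x G hlam hG => ?_⟩
  set S := (1 / (N : ℝ)) * ∑ j, x j ^ 2 / lam j ^ 2
  have hS : 0 ≤ S ^ q := by positivity
  have hNq : 1 ≤ (N : ℝ) ^ (q / 2) := Real.one_le_rpow (by exact_mod_cast hN) (by positivity)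
  calc _ ≤ A * S ^ q + B * (N : ℝ) ^ (q / 2) * m :=
        integral_malaJumpNormSq_rpow_le hN hq0 (Nat.le_ceil q) hl.le (fun j => (hlam j).ne') hG
    _ ≤ (A + B * m) * (S ^ q + (N : ℝ) ^ (q / 2)) := by
        nlinarith [mul_nonneg hA (zero_le_one.trans hNq), mul_nonneg (mul_nonneg hB hm) hS]

/-- One-step jump-size estimate in the Cameron–Martin norm for the MALA proposal
y = x − δ(x + C_N G) + √(2δ) λ ξ with δ = ℓ/√N:
E‖y − x‖_{C_N}^{2q} ≤ C (S^q + N^{q/2}), where S = N^{−1} ∑ x_j²/λ_j², uniformly over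
N, λ, x, G with ∑ λ_j² G_j² ≤ K². -/
theorem mala_jump_size_cameron_martin (q l K : ℝ) (hq : 1 / 2 ≤ q) (hl : 0 < l)
    (hK : 0 ≤ K) :
    ∃ C : ℝ, 0 < C ∧
      ∀ (N : ℕ), 1 ≤ N →
      ∀ lam x G : Fin N → ℝ,
        (∀ j, 0 < lam j) →
        (∑ j, lam j ^ 2 * G j ^ 2) ≤ K ^ 2 →
        (∫ ξ : Fin N → ℝ,
            (∑ j, ((x j - (l / Real.sqrt N) * (x j + lam j ^ 2 * G j)
                  + Real.sqrt (2 * (l / Real.sqrt N)) * lam j * ξ j) - x j) ^ 2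
              / lam j ^ 2) ^ q
            ∂(Measure.pi fun _ : Fin N => gaussianReal 0 1)) ≤
          C * (((1 / (N : ℝ)) * ∑ j, x j ^ 2 / lam j ^ 2) ^ q
                + (N : ℝ) ^ (q / 2)) :=
  mala_jump_size_cameron_martin_general q l K hq hl
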